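/- There exist constants C > 0 and ε > 0 such that for every k ∈ ℝ² with ‖k − K‖ ≤ ε one has |f(2π k·v₁, 2π k·v₂) − (π²/3)·‖k − K‖²| ≤ C·‖k − K‖³. -/

import Mathlib

/-!
Write `k = K + q` and `a = 2π⟪q, v₁⟫`, `b = 2π⟪q, v₂⟫`. Since `⟪K, v₁⟫ = -1/3` and `⟪K, v₂⟫ = 1/3`,
the arguments of `f` are `a - 2π/3` and `b + 2π/3`, and expanding
`9 f = 3 + 2 cos θ₁ + 2 cos θ₂ + 2 cos (θ₁ - θ₂)` around these shifts, the linear terms cancel and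
the quadratic part is `a² + b² - ab = 3π² ‖q‖²`. The remainder is cubic in `|a|, |b|, |a - b|`,
each of which is at most `2π ‖q‖` because `v₁`, `v₂` and `v₁ - v₂` are unit vectors.
-/

open Real

/-- `f(θ₁, θ₂) = (1/9)·|1 + exp(i θ₁) + exp(i θ₂)|²`. -/
noncomputable def f (θ₁ θ₂ : ℝ) : ℝ :=
  (1 / 9) * ‖1 + Complex.exp (θ₁ * Complex.I) + Complex.exp (θ₂ * Complex.I)‖ ^ 2

/-- The lattice vector `v₁ = (√3/2, −1/2)` in Euclidean `ℝ²`. -/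
noncomputable def v₁ : EuclideanSpace ℝ (Fin 2) := !₂[Real.sqrt 3 / 2, -(1 / 2)]

/-- The lattice vector `v₂ = (√3/2, 1/2)` in Euclidean `ℝ²`. -/
noncomputable def v₂ : EuclideanSpace ℝ (Fin 2) := !₂[Real.sqrt 3 / 2, 1 / 2]

/-- The Brillouin-zone vertex `K = (0, 2/3)` in Euclidean `ℝ²`. -/
noncomputable def Kpt : EuclideanSpace ℝ (Fin 2) := !₂[0, 2 / 3]

lemma f_eq_cos (θ₁ θ₂ : ℝ) :
    f θ₁ θ₂ = (3 + 2 * cos θ₁ + 2 * cos θ₂ + 2 * cos (θ₁ - θ₂)) / 9 := by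
  unfold f
  rw [Complex.sq_norm, Complex.exp_mul_I, Complex.exp_mul_I, ← Complex.ofReal_cos,
    ← Complex.ofReal_sin, ← Complex.ofReal_cos, ← Complex.ofReal_sin, cos_sub]
  simp only [Complex.normSq_apply, Complex.add_re, Complex.add_im, Complex.mul_re,
    Complex.mul_im, Complex.ofReal_re, Complex.ofReal_im, Complex.I_re, Complex.I_im,
    Complex.one_re, Complex.one_im]
  nlinarith [sin_sq_add_cos_sq θ₁, sin_sq_add_cos_sq θ₂]

lemma cos_two_pi_div_three : cos (2 * π / 3) = -(1 / 2) := by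
  rw [show 2 * π / 3 = π - π / 3 by ring, cos_pi_sub, cos_pi_div_three]

lemma sin_two_pi_div_three : sin (2 * π / 3) = √3 / 2 := by
  rw [show 2 * π / 3 = π - π / 3 by ring, sin_pi_sub, sin_pi_div_three]

lemma nine_mul_f_sub_add_two_pi_div_three (a b : ℝ) :
    9 * f (a - 2 * π / 3) (b + 2 * π / 3) =
      3 - cos a - cos b - cos (a - b) + √3 * (sin a - sin b - sin (a - b)) := by
  rw [f_eq_cos, show a - 2 * π / 3 - (b + 2 * π / 3) = a - b + 2 * π / 3 - 2 * π by ring,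
    cos_sub_two_pi, cos_sub, cos_add, cos_add, sin_two_pi_div_three, cos_two_pi_div_three]
  ring

lemma abs_cos_sub_one_sub_sq_div_two_le {x : ℝ} (hx : |x| ≤ 1) :
    |cos x - (1 - x ^ 2 / 2)| ≤ |x| ^ 3 / 4 := by
  have : |x| ^ 4 ≤ |x| ^ 3 := pow_le_pow_of_le_one (abs_nonneg x) hx (by norm_num)
  linarith [cos_bound hx, pow_nonneg (abs_nonneg x) 3]

lemma abs_sin_sub_self_le {x : ℝ} (hx : |x| ≤ 1) : |sin x - x| ≤ |x| ^ 3 / 4 := by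
  have : |x| ^ 5 ≤ |x| ^ 3 := pow_le_pow_of_le_one (abs_nonneg x) hx (by norm_num)
  calc |sin x - x| = |(sin x - (x - x ^ 3 / 6)) - x ^ 3 / 6| := by ring_nf
    _ ≤ |sin x - (x - x ^ 3 / 6)| + |x ^ 3 / 6| := abs_sub _ _
    _ ≤ |x| ^ 5 / 100 + |x| ^ 3 / 6 := by
        rw [abs_div, abs_pow, abs_of_pos (by norm_num : (0 : ℝ) < 6)]
        linarith [sin_bound hx]
    _ ≤ |x| ^ 3 / 4 := by linarith [pow_nonneg (abs_nonneg x) 3]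

lemma abs_f_sub_add_two_pi_div_three_sub_le {a b ρ : ℝ} (hρ : ρ ≤ 1) (ha : |a| ≤ ρ)
    (hb : |b| ≤ ρ) (hab : |a - b| ≤ ρ) :
    |f (a - 2 * π / 3) (b + 2 * π / 3) - (a ^ 2 + b ^ 2 - a * b) / 9| ≤ ρ ^ 3 / 3 := by
  have hcos (x : ℝ) (hx : |x| ≤ ρ) : |cos x - (1 - x ^ 2 / 2)| ≤ ρ ^ 3 / 4 :=
    (abs_cos_sub_one_sub_sq_div_two_le (hx.trans hρ)).trans (by gcongr)
  have hsin (x : ℝ) (hx : |x| ≤ ρ) : |sin x - x| ≤ ρ ^ 3 / 4 :=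
    (abs_sin_sub_self_le (hx.trans hρ)).trans (by gcongr)
  have hsqrt : √3 ≤ 3 := by
    rw [sqrt_le_left (by norm_num)]; norm_num
  have herr : f (a - 2 * π / 3) (b + 2 * π / 3) - (a ^ 2 + b ^ 2 - a * b) / 9 =
      (-((cos a - (1 - a ^ 2 / 2)) + (cos b - (1 - b ^ 2 / 2))
          + (cos (a - b) - (1 - (a - b) ^ 2 / 2)))
        + √3 * ((sin a - a) - (sin b - b) - (sin (a - b) - (a - b)))) / 9 := by
    linear_combination nine_mul_f_sub_add_two_pi_div_three a b / 9
  obtain ⟨hca₁, hca₂⟩ := abs_le.mp (hcos a ha)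
  obtain ⟨hcb₁, hcb₂⟩ := abs_le.mp (hcos b hb)
  obtain ⟨hcab₁, hcab₂⟩ := abs_le.mp (hcos (a - b) hab)
  obtain ⟨hsa₁, hsa₂⟩ := abs_le.mp (hsin a ha)
  obtain ⟨hsb₁, hsb₂⟩ := abs_le.mp (hsin b hb)
  obtain ⟨hsab₁, hsab₂⟩ := abs_le.mp (hsin (a - b) hab)
  rw [herr, abs_le]
  constructor <;> nlinarith [sqrt_nonneg 3]

lemma norm_v₁ : ‖v₁‖ = 1 := by
  norm_num [EuclideanSpace.norm_eq, v₁, Fin.sum_univ_two, div_pow]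

lemma norm_v₂ : ‖v₂‖ = 1 := by
  norm_num [EuclideanSpace.norm_eq, v₂, Fin.sum_univ_two, div_pow]

lemma norm_v₁_sub_v₂ : ‖v₁ - v₂‖ = 1 := by
  norm_num [EuclideanSpace.norm_eq, v₁, v₂, Fin.sum_univ_two]

lemma inner_v₁ (q : EuclideanSpace ℝ (Fin 2)) : inner ℝ q v₁ = √3 / 2 * q 0 - q 1 / 2 := by
  norm_num [v₁, PiLp.inner_apply, Fin.sum_univ_two, sub_eq_add_neg, div_eq_inv_mul]

lemma inner_v₂ (q : EuclideanSpace ℝ (Fin 2)) : inner ℝ q v₂ = √3 / 2 * q 0 + q 1 / 2 := by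
  norm_num [v₂, PiLp.inner_apply, Fin.sum_univ_two, div_eq_inv_mul]

lemma inner_Kpt_v₁ : inner ℝ Kpt v₁ = -(1 / 3) := by
  norm_num [inner_v₁, Kpt]

lemma inner_Kpt_v₂ : inner ℝ Kpt v₂ = 1 / 3 := by
  norm_num [inner_v₂, Kpt]

lemma inner_v₁_sq_add_inner_v₂_sq_sub_mul (q : EuclideanSpace ℝ (Fin 2)) :
    inner ℝ q v₁ ^ 2 + inner ℝ q v₂ ^ 2 - inner ℝ q v₁ * inner ℝ q v₂ = 3 / 4 * ‖q‖ ^ 2 := by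
  rw [EuclideanSpace.real_norm_sq_eq, Fin.sum_univ_two, inner_v₁, inner_v₂]
  linear_combination q 0 ^ 2 / 4 * sq_sqrt (show (0 : ℝ) ≤ 3 by norm_num)

lemma abs_two_pi_mul_inner_le {E : Type*} [NormedAddCommGroup E] [InnerProductSpace ℝ E]
    {q v : E} (hv : ‖v‖ = 1) :
    |2 * π * inner ℝ q v| ≤ 2 * π * ‖q‖ := by
  rw [abs_mul, abs_of_pos two_pi_pos]
  gcongr
  simpa [hv] using abs_real_inner_le_norm q v

theorem stmt_4 :
    ∃ C > (0 : ℝ), ∃ ε > (0 : ℝ), ∀ k : EuclideanSpace ℝ (Fin 2), ‖k - Kpt‖ ≤ ε →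
      |f (2 * π * (inner ℝ k v₁ : ℝ)) (2 * π * (inner ℝ k v₂ : ℝ)) -
        (π ^ 2 / 3) * ‖k - Kpt‖ ^ 2| ≤ C * ‖k - Kpt‖ ^ 3 := by
  refine ⟨8 * π ^ 3 / 3, by positivity, 1 / (2 * π), by positivity, fun k hk => ?_⟩
  set q := k - Kpt
  have hkq : k = q + Kpt := by simp [q]
  have hθ₁ : 2 * π * inner ℝ k v₁ = 2 * π * inner ℝ q v₁ - 2 * π / 3 := by
    rw [hkq, inner_add_left, inner_Kpt_v₁]; ring
  have hθ₂ : 2 * π * inner ℝ k v₂ = 2 * π * inner ℝ q v₂ + 2 * π / 3 := by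
    rw [hkq, inner_add_left, inner_Kpt_v₂]; ring
  have hquad : ((2 * π * inner ℝ q v₁) ^ 2 + (2 * π * inner ℝ q v₂) ^ 2
      - 2 * π * inner ℝ q v₁ * (2 * π * inner ℝ q v₂)) / 9 = π ^ 2 / 3 * ‖q‖ ^ 2 := by
    linear_combination 4 * π ^ 2 / 9 * inner_v₁_sq_add_inner_v₂_sq_sub_mul q
  have hdiff : 2 * π * inner ℝ q v₁ - 2 * π * inner ℝ q v₂ = 2 * π * inner ℝ q (v₁ - v₂) := by
    rw [inner_sub_right]; ring
  have hρ : 2 * π * ‖q‖ ≤ 1 := by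
    rwa [le_div_iff₀' two_pi_pos] at hk
  rw [hθ₁, hθ₂, ← hquad]
  calc _ ≤ (2 * π * ‖q‖) ^ 3 / 3 :=
        abs_f_sub_add_two_pi_div_three_sub_le hρ (abs_two_pi_mul_inner_le norm_v₁)
          (abs_two_pi_mul_inner_le norm_v₂) (hdiff ▸ abs_two_pi_mul_inner_le norm_v₁_sub_v₂)
    _ = 8 * π ^ 3 / 3 * ‖q‖ ^ 3 := by ring
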